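/- For any graph G of order n without isolated vertices, col(G) ≤ 2R'(G), where col(G) is the coloring number (degeneracy plus one) and R'(G) = Σ_{uv∈E} 1/max{d(u),d(v)}. -/

import Mathlib

open Finset

variable {V : Type*} [Fintype V] [DecidableEq V]

/-- Modified Randić index `R'(G) = Σ_{uv∈E} 1/max(d(u),d(v))`. -/
noncomputable def Rprime (G : SimpleGraph V) [DecidableRel G.Adj] : ℝ :=
  ∑ e ∈ G.edgeFinset,
    Sym2.lift ⟨fun u v => 1 / max (G.degree u : ℝ) (G.degree v),
      fun u v => by simp [max_comm]⟩ e

/-- Harmonic index `H(G) = Σ_{uv∈E} 2/(d(u)+d(v))`. -/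
noncomputable def harmonicIndex (G : SimpleGraph V) [DecidableRel G.Adj] : ℝ :=
  ∑ e ∈ G.edgeFinset,
    Sym2.lift ⟨fun u v => 2 / ((G.degree u : ℝ) + (G.degree v)),
      fun u v => by simp [add_comm]⟩ e

/-- Randić index `R(G) = Σ_{uv∈E} 1/√(d(u)d(v))`. -/
noncomputable def randic (G : SimpleGraph V) [DecidableRel G.Adj] : ℝ :=
  ∑ e ∈ G.edgeFinset,
    Sym2.lift ⟨fun u v => 1 / Real.sqrt ((G.degree u : ℝ) * (G.degree v)),
      fun u v => by simp [mul_comm]⟩ e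

/-- Coloring number: least `k` such that some linear ordering of the vertices has
each vertex preceded by fewer than `k` of its neighbors. -/
noncomputable def coloringNumber (G : SimpleGraph V) : ℕ :=
  sInf {k | ∃ L : LinearOrder V, ∀ v, {u | G.Adj u v ∧ L.lt u v}.ncard < k}

/-- Degeneracy: max over (induced) subgraphs of the minimum degree. -/
def degeneracy (G : SimpleGraph V) [DecidableRel G.Adj] : ℕ :=
  Finset.univ.sup fun s : Finset V =>
    if h : s.Nonempty then s.inf' h fun v => (s.filter fun w => G.Adj v w).card else 0

/-- Achromatic number: largest `k` admitting a complete `k`-coloring. -/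
noncomputable def achromaticNumber (G : SimpleGraph V) : ℕ :=
  sSup {k | ∃ C : G.Coloring (Fin k),
    ∀ c₁ c₂ : Fin k, c₁ ≠ c₂ → ∃ u v, G.Adj u v ∧ C u = c₁ ∧ C v = c₂}

/-- List chromatic number. -/
noncomputable def listChromaticNumber (G : SimpleGraph V) : ℕ :=
  sInf {k | ∀ L : V → Finset ℕ, (∀ v, k ≤ (L v).card) →
    ∃ c : V → ℕ, (∀ v, c v ∈ L v) ∧ ∀ ⦃u v⦄, G.Adj u v → c u ≠ c v}

/-- The eigenvalues of the (real) adjacency matrix of `G`. -/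
noncomputable def adjEigenvalues (G : SimpleGraph V) [DecidableRel G.Adj] : V → ℝ :=
  Matrix.IsHermitian.eigenvalues (A := G.adjMatrix ℝ)
    (by rw [Matrix.IsHermitian, Matrix.conjTranspose_eq_transpose_of_trivial]
        exact SimpleGraph.isSymm_adjMatrix G)

/-- `s⁺`: the sum of squares of the positive adjacency eigenvalues. -/
noncomputable def sPlus (G : SimpleGraph V) [DecidableRel G.Adj] : ℝ :=
  ∑ i : V, if 0 < adjEigenvalues G i then (adjEigenvalues G i) ^ 2 else 0

/-- The largest adjacency eigenvalue `μ`. -/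
noncomputable def specRad (G : SimpleGraph V) [DecidableRel G.Adj] : ℝ :=
  ⨆ i, adjEigenvalues G i

/-- `K_k • K_{1,n-k}`: the clique `K_k` on the first `k` vertices of `Fin n`, with the
vertex `k-1` identified with the center of a star whose leaves are the remaining vertices.
For `k = 1` this is the star `K_{1,n-1}`. -/
def cliqueStar (n k : ℕ) : SimpleGraph (Fin n) where
  Adj u v := u ≠ v ∧ (((u : ℕ) < k ∧ (v : ℕ) < k) ∨
    ((u : ℕ) + 1 = k ∧ k ≤ (v : ℕ)) ∨ ((v : ℕ) + 1 = k ∧ k ≤ (u : ℕ)))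
  symm := ⟨by rintro u v ⟨h1, h2⟩; exact ⟨h1.symm, by tauto⟩⟩
  loopless := ⟨by rintro u ⟨h1, -⟩; exact h1 rfl⟩

instance (n k : ℕ) : DecidableRel (cliqueStar n k).Adj := fun u v => by
  unfold cliqueStar; simp only; infer_instance

/-!
Peel off a vertex `v` of minimum positive degree `δ` by deleting its edges, and induct on the
number of edges; as the deletions create isolated vertices, the induction proves
`col G ≤ max 1 (2 R')`. Putting `v` last in an ordering of the smaller graph `G - v` shows
`col G ≤ max (col (G - v)) (δ + 1)`.

`R'` does not increase under this deletion. Writing the weight of an edge `xy` as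
`min (1/d x) (1/d y)`, the weight rises by at most the rise of `1/d x` plus that of `1/d y`;
summed over the remaining edges this is at most `Σ_{u ~ v} 1/d u`, which is exactly the weight
of the deleted edges, since `d v ≤ d u`.

Finally `δ + 1 ≤ 2 R'`. Order the vertices by degree and count each edge at its later end, whose
degree is the larger one: `R' = Σ_y c y / d y`, where `c y` is the number of earlier neighbours
of `y`. The non-isolated vertex with `j` non-isolated vertices after it has `c y ≥ d y - j`, so
`c y / d y ≥ 1 - j / δ`, and `Σ_{j ≤ δ} (1 - j / δ) = (δ + 1) / 2`.
-/

namespace Finset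

theorem sum_card_filter_lt_eq_sum_range {ι α M : Type*} [DecidableEq ι] [LinearOrder α]
    [AddCommMonoid M] (f : ι → α) (hf : Function.Injective f) (g : ℕ → M) (s : Finset ι) :
    ∑ x ∈ s, g #{y ∈ s | f x < f y} = ∑ j ∈ range #s, g j := by
  induction s using Finset.induction_on_min_value f with
  | empty => simp
  | insert a s ha hmin ih =>
    have h_a : {y ∈ insert a s | f a < f y} = s := by
      ext y
      simp only [mem_filter, mem_insert]
      refine ⟨fun ⟨hy, hlt⟩ => hy.resolve_left (by rintro rfl; exact hlt.false), fun hy => ?_⟩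
      exact ⟨Or.inr hy, (hmin y hy).lt_of_ne (hf.ne (ne_of_mem_of_not_mem hy ha).symm)⟩
    have h_s : ∀ x ∈ s, {y ∈ insert a s | f x < f y} = {y ∈ s | f x < f y} := fun x hx => by
      rw [filter_insert, if_neg (hmin x hx).not_gt]
    rw [sum_insert ha, card_insert_of_notMem ha, sum_range_succ, h_a,
      sum_congr rfl fun x hx => by rw [h_s x hx], ih, add_comm]

end Finset

theorem sum_range_succ_one_sub_div {n : ℕ} (hn : n ≠ 0) :
    ∑ j ∈ range (n + 1), (1 - (j : ℝ) / n) = (n + 1) / 2 := by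
  have gauss : (∑ j ∈ range (n + 1), (j : ℝ)) * 2 = ((n : ℝ) + 1) * n := by
    have := sum_range_id_mul_two (n + 1)
    rw [Nat.add_sub_cancel] at this
    rw [← Nat.cast_sum]
    exact_mod_cast this
  rw [sum_sub_distrib, ← sum_div, sum_const, card_range, nsmul_one]
  field_simp
  push_cast
  linarith

theorem max_one_sub_div_le_div {a c d δ : ℕ} (hδ : 0 < δ) (hδd : δ ≤ d) (hd : d ≤ c + a) :
    max (1 - (a : ℝ) / δ) 0 ≤ (c : ℝ) / d := by
  have hd0 : (0 : ℝ) < d := by exact_mod_cast hδ.trans_le hδd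
  have hd' : (d : ℝ) ≤ c + a := by exact_mod_cast hd
  refine max_le ?_ (by positivity)
  calc 1 - (a : ℝ) / δ ≤ 1 - (a : ℝ) / d := by gcongr
    _ = (d - a : ℝ) / d := by field_simp
    _ ≤ c / d := by gcongr; linarith

theorem one_div_max_sub_one_div_max_le {a b a' b' : ℝ} (ha' : 0 < a') (hb' : 0 < b')
    (ha : a' ≤ a) (hb : b' ≤ b) :
    1 / max a' b' - 1 / max a b ≤ (1 / a' - 1 / a) + (1 / b' - 1 / b) := by
  have hda : 0 ≤ 1 / a' - 1 / a := sub_nonneg.mpr (one_div_le_one_div_of_le ha' ha)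
  have hdb : 0 ≤ 1 / b' - 1 / b := sub_nonneg.mpr (one_div_le_one_div_of_le hb' hb)
  have hmax_a : 1 / max a' b' ≤ 1 / a' := one_div_le_one_div_of_le ha' (le_max_left _ _)
  have hmax_b : 1 / max a' b' ≤ 1 / b' := one_div_le_one_div_of_le hb' (le_max_right _ _)
  rcases le_total a b with h | h
  · rw [max_eq_right h]; linarith
  · rw [max_eq_left h]; linarith

theorem mul_one_div_sub_one_div_add_one_le {a : ℝ} (ha : 0 ≤ a) :
    a * (1 / a - 1 / (a + 1)) ≤ 1 / (a + 1) := by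
  rcases ha.eq_or_lt with rfl | ha
  · norm_num
  · rw [mul_sub, mul_one_div_cancel ha.ne']
    field_simp
    linarith

namespace SimpleGraph

variable (G : SimpleGraph V) [DecidableRel G.Adj]

section DoubleCounting

variable {M : Type*} [AddCommMonoid M]

theorem sum_darts_eq_sum_sum_neighborFinset (f : V → V → M) :
    ∑ d : G.Dart, f d.fst d.snd = ∑ x, ∑ y ∈ G.neighborFinset x, f x y := by
  rw [← sum_fiberwise univ (fun d : G.Dart => d.fst)]
  refine sum_congr rfl fun x _ => ?_
  rw [dart_fst_fiber, sum_image fun _ _ _ _ h => G.dartOfNeighborSet_injective x h]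
  exact (sum_subtype _ (fun y => mem_neighborFinset G x y) (f x)).symm

theorem sum_sum_neighborFinset_comm (f : V → V → M) :
    ∑ x, ∑ y ∈ G.neighborFinset x, f y x = ∑ x, ∑ y ∈ G.neighborFinset x, f x y := by
  rw [← sum_darts_eq_sum_sum_neighborFinset, ← sum_darts_eq_sum_sum_neighborFinset]
  exact Fintype.sum_equiv (Function.Involutive.toPerm _ Dart.symm_symm) _ _ fun _ => rfl

theorem sum_sum_neighborFinset_add (g : V → M) :
    ∑ x, ∑ y ∈ G.neighborFinset x, (g x + g y) = 2 • ∑ x, G.degree x • g x := by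
  simp only [sum_add_distrib]
  rw [G.sum_sum_neighborFinset_comm (fun a _ => g a)]
  simp only [sum_const, card_neighborFinset_eq_degree, two_nsmul]

theorem sum_darts_edge (F : Sym2 V → M) :
    ∑ d : G.Dart, F d.edge = 2 • ∑ e ∈ G.edgeFinset, F e := by
  rw [← sum_fiberwise_of_maps_to (g := Dart.edge) (t := G.edgeFinset)
    (fun d _ => mem_edgeFinset.mpr d.edge_mem), smul_sum]
  refine sum_congr rfl fun e he => ?_
  rw [sum_congr rfl fun d hd => congrArg F (mem_filter.mp hd).2, sum_const,
    G.dart_edge_fiber_card e (mem_edgeFinset.mp he)]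

theorem two_nsmul_sum_edgeFinset_lift (f : V → V → M) (hf : ∀ x y, f x y = f y x) :
    2 • ∑ e ∈ G.edgeFinset, Sym2.lift ⟨f, hf⟩ e = ∑ x, ∑ y ∈ G.neighborFinset x, f x y := by
  rw [← sum_darts_edge, ← sum_darts_eq_sum_sum_neighborFinset]
  rfl

theorem sum_incidenceFinset (v : V) (F : Sym2 V → M) :
    ∑ e ∈ G.incidenceFinset v, F e = ∑ u ∈ G.neighborFinset v, F s(v, u) := by
  have : G.incidenceFinset v = (G.neighborFinset v).image (s(v, ·)) := by
    ext ⟨a, b⟩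
    simp only [mem_incidenceFinset, mk'_mem_incidenceSet_iff, mem_image, mem_neighborFinset,
      Sym2.eq, Sym2.rel_iff', Prod.mk.injEq, Prod.swap_prod_mk]
    grind [Adj.symm]
  rw [this, sum_image fun _ _ _ _ h => Sym2.congr_right.mp h]

end DoubleCounting

section DeleteIncidenceSet

variable {G} {v x : V}

theorem neighborFinset_deleteIncidenceSet_of_ne (hx : x ≠ v) :
    (G.deleteIncidenceSet v).neighborFinset x = (G.neighborFinset x).erase v := by
  ext y
  simp only [mem_neighborFinset, deleteIncidenceSet_adj, mem_erase]
  tauto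

theorem degree_deleteIncidenceSet_self : (G.deleteIncidenceSet v).degree v = 0 := by
  rw [degree_eq_zero_iff_notMem_support]
  exact fun h => (support_deleteIncidenceSet_subset G v h).2 rfl

theorem degree_deleteIncidenceSet_add_one (h : G.Adj v x) :
    (G.deleteIncidenceSet v).degree x + 1 = G.degree x := by
  rw [← card_neighborFinset_eq_degree, ← card_neighborFinset_eq_degree,
    neighborFinset_deleteIncidenceSet_of_ne h.ne', card_erase_add_one]
  exact (mem_neighborFinset _ _ _).mpr h.symm

theorem degree_deleteIncidenceSet_of_not_adj (hx : x ≠ v) (h : ¬G.Adj v x) :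
    (G.deleteIncidenceSet v).degree x = G.degree x := by
  rw [← card_neighborFinset_eq_degree, ← card_neighborFinset_eq_degree,
    neighborFinset_deleteIncidenceSet_of_ne hx, erase_eq_of_notMem]
  exact fun hv => h ((mem_neighborFinset _ _ _).mp hv).symm

end DeleteIncidenceSet

omit [DecidableEq V] in
theorem degree_le_card_lt_add_card_gt {α : Type*} [LinearOrder α] {f : V → α}
    (hf : Function.Injective f) {s : Finset V} {x : V} (hs : G.neighborFinset x ⊆ s) :
    G.degree x ≤ #{y ∈ G.neighborFinset x | f y < f x} + #{z ∈ s | f x < f z} := by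
  rw [← card_neighborFinset_eq_degree, ← card_filter_add_card_filter_not (fun y => f y < f x)]
  refine Nat.add_le_add_left (card_le_card fun y hy => ?_) _
  obtain ⟨hy, hlt⟩ := mem_filter.mp hy
  have hne : f x ≠ f y := hf.ne (G.ne_of_adj ((mem_neighborFinset _ _ _).mp hy))
  exact mem_filter.mpr ⟨hs hy, (not_lt.mp hlt).lt_of_ne hne⟩

omit [DecidableEq V] in
theorem exists_min_pos_degree (h : ∃ v, 0 < G.degree v) :
    ∃ v, 0 < G.degree v ∧ ∀ u, 0 < G.degree u → G.degree v ≤ G.degree u := by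
  obtain ⟨v₀, hv₀⟩ := h
  obtain ⟨v, hv, hmin⟩ := exists_min_image {u | 0 < G.degree u} (fun u => G.degree u)
    ⟨v₀, mem_filter.mpr ⟨mem_univ v₀, hv₀⟩⟩
  exact ⟨v, (mem_filter.mp hv).2, fun u hu => hmin u (mem_filter.mpr ⟨mem_univ u, hu⟩)⟩

end SimpleGraph

open SimpleGraph

section Rprime

variable (G : SimpleGraph V) [DecidableRel G.Adj]

theorem two_mul_Rprime :
    2 * Rprime G = ∑ x, ∑ y ∈ G.neighborFinset x, 1 / max (G.degree x : ℝ) (G.degree y) := by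
  rw [Rprime, ← two_nsmul_sum_edgeFinset_lift, two_nsmul, two_mul]

theorem Rprime_eq_sum_card_lt_div_degree {α : Type*} [LinearOrder α] (f : V → α)
    (hf : Function.Injective f) (hmono : ∀ x y, f x < f y → G.degree x ≤ G.degree y) :
    Rprime G = ∑ x, (#{y ∈ G.neighborFinset x | f y < f x} : ℝ) / G.degree x := by
  set F : V → V → ℝ := fun x y => if f y < f x then 1 / G.degree x else 0
  have hsplit : ∀ x, ∀ y ∈ G.neighborFinset x,
      1 / max (G.degree x : ℝ) (G.degree y) = F x y + F y x := fun x y hy => by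
    have hne : f x ≠ f y := hf.ne (G.ne_of_adj ((mem_neighborFinset _ _ _).mp hy))
    rcases hne.lt_or_gt with h | h
    · have hd : (G.degree x : ℝ) ≤ G.degree y := by exact_mod_cast hmono x y h
      simp [F, h, h.not_gt, max_eq_right hd]
    · have hd : (G.degree y : ℝ) ≤ G.degree x := by exact_mod_cast hmono y x h
      simp [F, h, h.not_gt, max_eq_left hd]
  have hcount : ∀ x, ∑ y ∈ G.neighborFinset x, F x y
      = (#{y ∈ G.neighborFinset x | f y < f x} : ℝ) / G.degree x := fun x => by
    rw [← sum_filter, sum_const, nsmul_eq_mul, mul_one_div]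
  have h2 : 2 * Rprime G = 2 * ∑ x, ∑ y ∈ G.neighborFinset x, F x y := by
    rw [two_mul_Rprime, sum_congr rfl fun x _ => sum_congr rfl (hsplit x)]
    simp only [sum_add_distrib]
    rw [G.sum_sum_neighborFinset_comm (fun y x => F x y)]
    ring
  rw [← sum_congr rfl fun x _ => hcount x]
  linarith

theorem add_one_le_two_mul_Rprime {v : V} (hv : 0 < G.degree v)
    (hmin : ∀ u, 0 < G.degree u → G.degree v ≤ G.degree u) :
    (G.degree v : ℝ) + 1 ≤ 2 * Rprime G := by
  set δ := G.degree v with hδ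
  set f : V → ℕ ×ₗ Fin (Fintype.card V) := fun x => toLex (G.degree x, Fintype.equivFin V x)
  have hf : Function.Injective f := fun x y h =>
    (Fintype.equivFin V).injective (Prod.ext_iff.mp (toLex.injective h)).2
  have hmono : ∀ x y, f x < f y → G.degree x ≤ G.degree y := fun x y h =>
    Prod.Lex.monotone_fst _ _ h.le
  set W : Finset V := {z | 0 < G.degree z}
  have hNW : ∀ x, G.neighborFinset x ⊆ W := fun x y hy => mem_filter.mpr
    ⟨mem_univ y, (G.degree_pos_iff_exists_adj y).mpr ⟨x, ((mem_neighborFinset _ _ _).mp hy).symm⟩⟩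
  have hcardW : δ + 1 ≤ #W := by
    rw [hδ, ← card_neighborFinset_eq_degree,
      ← card_insert_of_notMem (notMem_neighborFinset_self G v)]
    exact card_le_card (insert_subset (mem_filter.mpr ⟨mem_univ v, hv⟩) (hNW v))
  set g : ℕ → ℝ := fun j => max (1 - j / δ) 0
  have hterm : ∀ x ∈ W, g #{z ∈ W | f x < f z}
      ≤ (#{y ∈ G.neighborFinset x | f y < f x} : ℝ) / G.degree x := fun x hx =>
    max_one_sub_div_le_div hv (hmin x (mem_filter.mp hx).2)
      (G.degree_le_card_lt_add_card_gt hf (hNW x))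
  calc (δ : ℝ) + 1 = 2 * ∑ j ∈ range (δ + 1), (1 - (j : ℝ) / δ) := by
        rw [sum_range_succ_one_sub_div hv.ne']; ring
    _ ≤ 2 * ∑ j ∈ range (δ + 1), g j := by gcongr; exact le_max_left _ _
    _ ≤ 2 * ∑ j ∈ range #W, g j := by gcongr
    _ = 2 * ∑ x ∈ W, g #{z ∈ W | f x < f z} := by rw [sum_card_filter_lt_eq_sum_range f hf]
    _ ≤ 2 * ∑ x ∈ W, (#{y ∈ G.neighborFinset x | f y < f x} : ℝ) / G.degree x := by
        gcongr with x hx; exact hterm x hx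
    _ ≤ 2 * ∑ x, (#{y ∈ G.neighborFinset x | f y < f x} : ℝ) / G.degree x := by
        gcongr
        exact subset_univ W
    _ = 2 * Rprime G := by rw [Rprime_eq_sum_card_lt_div_degree G f hf hmono]

theorem two_mul_Rprime_eq_deleteIncidenceSet_add (v : V) :
    2 * Rprime G = ∑ x, ∑ y ∈ (G.deleteIncidenceSet v).neighborFinset x,
        1 / max (G.degree x : ℝ) (G.degree y)
      + 2 * ∑ u ∈ G.neighborFinset v, 1 / max (G.degree v : ℝ) (G.degree u) := by
  rw [← two_nsmul_sum_edgeFinset_lift _ _ fun x y => by simp only [max_comm], Rprime,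
    ← sum_sdiff (G.incidenceFinset_subset v), sum_incidenceFinset,
    edgeFinset_deleteIncidenceSet_eq_sdiff]
  simp only [Sym2.lift_mk, two_nsmul]
  ring

theorem two_mul_Rprime_deleteIncidenceSet_le (v : V) :
    2 * Rprime (G.deleteIncidenceSet v)
      ≤ ∑ x, ∑ y ∈ (G.deleteIncidenceSet v).neighborFinset x,
          1 / max (G.degree x : ℝ) (G.degree y)
        + 2 * ∑ u ∈ G.neighborFinset v, 1 / (G.degree u : ℝ) := by
  set e : V → ℝ := fun x => 1 / ((G.deleteIncidenceSet v).degree x : ℝ) - 1 / G.degree x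
  have hpair : ∀ x, ∀ y ∈ (G.deleteIncidenceSet v).neighborFinset x,
      1 / max ((G.deleteIncidenceSet v).degree x : ℝ) ((G.deleteIncidenceSet v).degree y)
        ≤ 1 / max (G.degree x : ℝ) (G.degree y) + (e x + e y) := fun x y hy => by
    have hxy := (mem_neighborFinset _ _ _).mp hy
    have hdeg : ∀ z, ((G.deleteIncidenceSet v).degree z : ℝ) ≤ G.degree z := fun z => by
      exact_mod_cast degree_le_of_le (G.deleteIncidenceSet_le v)
    have hx : (0 : ℝ) < (G.deleteIncidenceSet v).degree x := by
      exact_mod_cast (degree_pos_iff_exists_adj _ x).mpr ⟨y, hxy⟩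
    have hy : (0 : ℝ) < (G.deleteIncidenceSet v).degree y := by
      exact_mod_cast (degree_pos_iff_exists_adj _ y).mpr ⟨x, hxy.symm⟩
    linarith [one_div_max_sub_one_div_max_le hx hy (hdeg x) (hdeg y)]
  have hgain : ∀ x, (G.deleteIncidenceSet v).degree x * e x
      ≤ if G.Adj v x then 1 / (G.degree x : ℝ) else 0 := fun x => by
    by_cases hxv : x = v
    · rw [hxv, degree_deleteIncidenceSet_self]
      simp
    by_cases hadj : G.Adj v x
    · have hd : (G.degree x : ℝ) = (G.deleteIncidenceSet v).degree x + 1 := by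
        exact_mod_cast (degree_deleteIncidenceSet_add_one hadj).symm
      simp only [e, if_pos hadj, hd]
      exact mul_one_div_sub_one_div_add_one_le (Nat.cast_nonneg _)
    · simp [e, hadj, degree_deleteIncidenceSet_of_not_adj hxv hadj]
  have hsum := (G.deleteIncidenceSet v).sum_sum_neighborFinset_add e
  simp only [sum_add_distrib, nsmul_eq_mul] at hsum
  calc 2 * Rprime (G.deleteIncidenceSet v)
      = ∑ x, ∑ y ∈ (G.deleteIncidenceSet v).neighborFinset x,
          1 / max ((G.deleteIncidenceSet v).degree x : ℝ) ((G.deleteIncidenceSet v).degree y) :=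
        two_mul_Rprime _
    _ ≤ ∑ x, ∑ y ∈ (G.deleteIncidenceSet v).neighborFinset x,
          (1 / max (G.degree x : ℝ) (G.degree y) + (e x + e y)) :=
        sum_le_sum fun x _ => sum_le_sum (hpair x)
    _ = ∑ x, ∑ y ∈ (G.deleteIncidenceSet v).neighborFinset x,
          1 / max (G.degree x : ℝ) (G.degree y)
          + 2 * ∑ x, (G.deleteIncidenceSet v).degree x * e x := by
        simp only [sum_add_distrib]
        rw [hsum]
        push_cast
        ring
    _ ≤ _ := by
        gcongr
        calc ∑ x, (G.deleteIncidenceSet v).degree x * e x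
            ≤ ∑ x, if G.Adj v x then 1 / (G.degree x : ℝ) else 0 := sum_le_sum fun x _ => hgain x
          _ = ∑ u ∈ G.neighborFinset v, 1 / (G.degree u : ℝ) := by
              rw [← sum_filter, neighborFinset_eq_filter]

theorem Rprime_deleteIncidenceSet_le {v : V} (hmin : ∀ u, G.Adj v u → G.degree v ≤ G.degree u) :
    Rprime (G.deleteIncidenceSet v) ≤ Rprime G := by
  have hloss : ∑ u ∈ G.neighborFinset v, 1 / max (G.degree v : ℝ) (G.degree u)
      = ∑ u ∈ G.neighborFinset v, 1 / (G.degree u : ℝ) := sum_congr rfl fun u hu => by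
    rw [max_eq_right (by exact_mod_cast hmin u ((mem_neighborFinset _ _ _).mp hu))]
  linarith [two_mul_Rprime_eq_deleteIncidenceSet_add G v, two_mul_Rprime_deleteIncidenceSet_le G v]

end Rprime

section ColoringNumber

variable (G : SimpleGraph V)

omit [Fintype V] [DecidableEq V] in
theorem coloringNumber_le {k : ℕ} (L : LinearOrder V)
    (h : ∀ v, {u | G.Adj u v ∧ L.lt u v}.ncard < k) : coloringNumber G ≤ k :=
  Nat.sInf_le ⟨L, h⟩

omit [DecidableEq V] in
theorem ncard_adj_lt_lt_degree_add_one [DecidableRel G.Adj] (L : LinearOrder V) (v : V) :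
    {u | G.Adj u v ∧ L.lt u v}.ncard < G.degree v + 1 := by
  rw [Nat.lt_succ_iff, ← card_neighborFinset_eq_degree, ← Set.ncard_coe_finset]
  exact Set.ncard_le_ncard fun u hu => (mem_neighborFinset _ _ _).mpr hu.1.symm

omit [DecidableEq V] in
theorem ncard_adj_lt_lt_maxDegree_add_one [DecidableRel G.Adj] (L : LinearOrder V) (v : V) :
    {u | G.Adj u v ∧ L.lt u v}.ncard < G.maxDegree + 1 :=
  (ncard_adj_lt_lt_degree_add_one G L v).trans_le (Nat.succ_le_succ (G.degree_le_maxDegree v))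

omit [DecidableEq V] in
theorem coloringNumber_le_maxDegree_add_one [DecidableRel G.Adj] :
    coloringNumber G ≤ G.maxDegree + 1 :=
  coloringNumber_le G (LinearOrder.lift' _ (Fintype.equivFin V).injective)
    (ncard_adj_lt_lt_maxDegree_add_one G _)

omit [DecidableEq V] in
theorem exists_linearOrder_ncard_adj_lt_lt_coloringNumber [DecidableRel G.Adj] :
    ∃ L : LinearOrder V, ∀ v, {u | G.Adj u v ∧ L.lt u v}.ncard < coloringNumber G :=
  Nat.sInf_mem (s := {k | ∃ L : LinearOrder V, ∀ v, {u | G.Adj u v ∧ L.lt u v}.ncard < k})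
    ⟨_, LinearOrder.lift' _ (Fintype.equivFin V).injective, ncard_adj_lt_lt_maxDegree_add_one G _⟩

theorem coloringNumber_le_max_deleteIncidenceSet [DecidableRel G.Adj] (v : V) :
    coloringNumber G ≤ max (coloringNumber (G.deleteIncidenceSet v)) (G.degree v + 1) := by
  obtain ⟨L', hL'⟩ := exists_linearOrder_ncard_adj_lt_lt_coloringNumber (G.deleteIncidenceSet v)
  let _ : LinearOrder V := L'
  let f : V → WithTop V := fun u => if u = v then ⊤ else u
  have hf : Function.Injective f := fun a b h => by
    by_cases ha : a = v <;> by_cases hb : b = v <;> simp_all [f]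
  refine coloringNumber_le G (LinearOrder.lift' f hf) fun u => ?_
  by_cases hu : u = v
  · subst hu
    exact (ncard_adj_lt_lt_degree_add_one G (LinearOrder.lift' f hf) u).trans_le (le_max_right _ _)
  refine (Set.ncard_le_ncard fun w hw => ?_).trans_lt ((hL' u).trans_le (le_max_left _ _))
  obtain ⟨hadj, hlt⟩ := hw
  change f w < f u at hlt
  have hw : w ≠ v := by
    rintro rfl
    simp [f, hu] at hlt
  exact ⟨deleteIncidenceSet_adj.mpr ⟨hadj, hw, hu⟩, by simpa [f, hw, hu] using hlt⟩

end ColoringNumber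

theorem coloringNumber_le_max_one_two_mul_Rprime (G : SimpleGraph V) [DecidableRel G.Adj] :
    (coloringNumber G : ℝ) ≤ max 1 (2 * Rprime G) := by
  by_cases hpos : ∃ v, 0 < G.degree v
  · obtain ⟨v, hv, hmin⟩ := G.exists_min_pos_degree hpos
    have hcol : (coloringNumber G : ℝ)
        ≤ max (coloringNumber (G.deleteIncidenceSet v) : ℝ) (G.degree v + 1) := by
      exact_mod_cast coloringNumber_le_max_deleteIncidenceSet G v
    have ih := coloringNumber_le_max_one_two_mul_Rprime (G.deleteIncidenceSet v)
    have hdel := Rprime_deleteIncidenceSet_le G fun u hu =>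
      hmin u ((G.degree_pos_iff_exists_adj u).mpr ⟨v, hu.symm⟩)
    have hA := add_one_le_two_mul_Rprime G hv hmin
    exact hcol.trans <|
      max_le (ih.trans <| max_le_max le_rfl (by linarith)) (hA.trans <| le_max_right _ _)
  · have hΔ : G.maxDegree = 0 := Nat.le_zero.mp <|
      G.maxDegree_le_of_forall_degree_le 0 fun v => not_lt.mp fun hv => hpos ⟨v, hv⟩
    have := coloringNumber_le_maxDegree_add_one G
    rw [hΔ] at this
    exact le_max_of_le_left (by exact_mod_cast this)
termination_by #G.edgeFinset
decreasing_by
  rw [card_edgeFinset_deleteIncidenceSet]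
  have := G.degree_le_card_edgeFinset v
  omega

theorem col_le_two_rprime (G : SimpleGraph V) [DecidableRel G.Adj]
    (h : ∀ v, 0 < G.degree v) :
    (coloringNumber G : ℝ) ≤ 2 * Rprime G := by
  rcases isEmpty_or_nonempty V with hV | hV
  · have : coloringNumber G = 0 := Nat.le_zero.mp <| coloringNumber_le G
      (LinearOrder.lift' _ (Fintype.equivFin V).injective) fun v => isEmptyElim v
    rw [this, Rprime, eq_empty_of_isEmpty G.edgeFinset]
    simp
  · obtain ⟨v, hv, hmin⟩ := G.exists_min_pos_degree ⟨Classical.arbitrary V, h _⟩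
    have hA := add_one_le_two_mul_Rprime G hv hmin
    have : (1 : ℝ) ≤ G.degree v := by exact_mod_cast hv
    exact (coloringNumber_le_max_one_two_mul_Rprime G).trans (max_le (by linarith) le_rfl)
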